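/- Let n ≥ 2 and let f ∈ ℂ[x₀,…,xₙ] be homogeneous of degree d such that V = V(f) ⊆ ℙⁿ has only isolated singularities and p = (1:0:⋯:0) is a singular point of V. Assume in addition that the n partial derivatives ∂₁f,…,∂ₙf have only finitely many common zeros in ℙⁿ (so that the ideal I = (∂₁f,…,∂ₙf) is a zero-dimensional complete intersection). If g(y₁,…,yₙ) = f(1,y₁,…,yₙ) belongs to the ideal (g₁,…,gₙ) of its partial derivatives in the localization of ℂ[y₁,…,yₙ] at (y₁,…,yₙ), then there exist a homogeneous polynomial h ∈ R with h(1,0,…,0) ≠ 0 and homogeneous polynomials a₁,…,aₙ ∈ R such that h·∂₀f = a₁∂₁f + ⋯ + aₙ∂ₙf; in particular (h, −a₁, …, −aₙ) is a Jacobian syzygy for f whose zeroth component does not vanish at p. -/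

import Mathlib

/-!
Saito's condition gives `u * g = ∑ⱼ bⱼ * ∂ⱼg` with `u(0) ≠ 0`, where `g = f(1, y)`. Homogenizing
`u` and the `bⱼ` to a common degree `e` yields `H * f = x₀ * ∑ⱼ Bⱼ * ∂ⱼf`: both sides are
homogeneous of degree `e + d` with the same dehomogenization, and dehomogenization is injective on
homogeneous polynomials. Multiplying Euler's identity `x₀ * ∂₀f = d * f - ∑ⱼ xⱼ * ∂ⱼf` by `H` then
writes `x₀ * H * ∂₀f` in terms of `∂₁f, …, ∂ₙf`, and `(x₀ * H)(p) = u(0) ≠ 0`.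
-/

open MvPolynomial

noncomputable section

/-- Dehomogenization with respect to `x₀`: substitute `x₀ = 1`, `xᵢ = yᵢ`. -/
def deh (n : ℕ) : MvPolynomial (Fin (n + 1)) ℂ →ₐ[ℂ] MvPolynomial (Fin n) ℂ :=
  aeval (fun i => Fin.cases 1 (fun j => X j) i)

/-- The point `(1:0:⋯:0)`. -/
def pt (n : ℕ) : Fin (n + 1) → ℂ := fun i => if i = 0 then 1 else 0

/-- Saito's local condition at the origin: `g` lies in the ideal generated by its partial
derivatives in the localization of `ℂ[y₁,…,yₙ]` at the maximal ideal `(y₁,…,yₙ)`;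
equivalently, `u·g ∈ (g₁,…,gₙ)` for some polynomial `u` with `u(0) ≠ 0`. -/
def SaitoQH {n : ℕ} (g : MvPolynomial (Fin n) ℂ) : Prop :=
  ∃ u : MvPolynomial (Fin n) ℂ, eval (0 : Fin n → ℂ) u ≠ 0 ∧
    u * g ∈ Ideal.span (Set.range fun j : Fin n => pderiv j g)

namespace MvPolynomial

theorem IsHomogeneous.eval_smul {R σ : Type*} [CommSemiring R] {φ : MvPolynomial σ R} {n : ℕ}
    (hφ : φ.IsHomogeneous n) (c : R) (v : σ → R) : eval (c • v) φ = c ^ n * eval v φ := by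
  rw [eval_eq, eval_eq, Finset.mul_sum]
  refine Finset.sum_congr rfl fun s hs => ?_
  have hdeg : ∑ i ∈ s.support, s i = n := by
    rw [← Finsupp.degree_apply, Finsupp.degree_eq_weight_one]
    exact hφ (mem_support_iff.mp hs)
  simp only [Pi.smul_apply, smul_eq_mul, mul_pow, Finset.prod_mul_distrib,
    Finset.prod_pow_eq_pow_sum, hdeg]
  ring

theorem IsHomogeneous.X_mul_pderiv {R σ : Type*} [CommSemiring R] {φ : MvPolynomial σ R}
    {n : ℕ} (hφ : φ.IsHomogeneous n) (i j : σ) : (X i * pderiv j φ).IsHomogeneous n := by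
  obtain _ | n := n
  · rw [← totalDegree_zero_iff_isHomogeneous, totalDegree_eq_zero_iff_eq_C] at hφ
    rw [hφ, pderiv_C, mul_zero]
    exact isHomogeneous_zero _ _ _
  · simpa [add_comm] using (isHomogeneous_X R i).mul hφ.pderiv

theorem sum_homogeneousComponent_of_totalDegree_le {R σ : Type*} [CommSemiring R]
    {φ : MvPolynomial σ R} {N : ℕ} (h : φ.totalDegree ≤ N) :
    ∑ k ∈ Finset.range (N + 1), homogeneousComponent k φ = φ := by
  conv_rhs => rw [← sum_homogeneousComponent φ]
  refine (Finset.sum_subset (Finset.range_subset_range.mpr (by omega)) fun k _ hk => ?_).symm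
  exact homogeneousComponent_eq_zero k φ (by simp at hk; omega)

theorem IsHomogeneous.X_zero_mul_mul_pderiv_zero {R : Type*} [CommRing R]
    {n d : ℕ} {f H : MvPolynomial (Fin (n + 1)) R} {B : Fin n → MvPolynomial (Fin (n + 1)) R}
    (hf : f.IsHomogeneous d) (hH : H * f = X 0 * ∑ j, B j * pderiv j.succ f) :
    X 0 * H * pderiv 0 f = ∑ j, (C (d : R) * X 0 * B j - H * X j.succ) * pderiv j.succ f := by
  have heuler := hf.sum_X_mul_pderiv
  rw [Fin.sum_univ_succ, nsmul_eq_mul, ← C_eq_coe_nat] at heuler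
  simp only [sub_mul, Finset.sum_sub_distrib, mul_assoc, ← Finset.mul_sum]
  linear_combination H * heuler + C (d : R) * hH

end MvPolynomial

section Dehomogenization

variable {n : ℕ}

@[simp] theorem deh_X_zero : deh n (X 0) = 1 := by simp [deh]

@[simp] theorem deh_X_succ (j : Fin n) : deh n (X j.succ) = X j := by simp [deh]

@[simp] theorem deh_rename_succ (g : MvPolynomial (Fin n) ℂ) :
    deh n (rename Fin.succ g) = g := by
  rw [deh, aeval_rename]
  convert aeval_X_left_apply g
  ext1 j
  simp

theorem deh_pderiv_succ (j : Fin n) (F : MvPolynomial (Fin (n + 1)) ℂ) :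
    deh n (pderiv j.succ F) = pderiv j (deh n F) := by
  induction F using MvPolynomial.induction_on with
  | C a => simp [deh]
  | add p q hp hq => simp only [map_add, hp, hq]
  | mul_X p i hp =>
    simp only [pderiv_mul, map_add, map_mul, hp, add_right_inj]
    congr 1
    induction i using Fin.cases with
    | zero => simp [pderiv_X_of_ne (Fin.succ_ne_zero j).symm]
    | succ k => simp [pderiv_X, Pi.single_apply]

theorem eval_deh (F : MvPolynomial (Fin (n + 1)) ℂ) {w : Fin (n + 1) → ℂ} (hw : w 0 = 1) :
    eval (Fin.tail w) (deh n F) = eval w F := by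
  induction F using MvPolynomial.induction_on with
  | C a => simp [deh]
  | add p q hp hq => simp only [map_add, hp, hq]
  | mul_X p i hp =>
    induction i using Fin.cases with
    | zero => simp [hp, hw]
    | succ k => simp [hp, Fin.tail]

theorem eq_zero_of_deh_eq_zero {e : ℕ} {F : MvPolynomial (Fin (n + 1)) ℂ}
    (hF : F.IsHomogeneous e) (h : deh n F = 0) : F = 0 := by
  suffices X 0 * F = 0 from (mul_eq_zero.mp this).resolve_left (X_ne_zero 0)
  refine ((isHomogeneous_X ℂ 0).mul hF).eq_zero_of_forall_eval_eq_zero fun v => ?_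
  rw [eval_mul, eval_X]
  rcases eq_or_ne (v 0) 0 with hv | hv
  · rw [hv, zero_mul]
  · have hw : ((v 0)⁻¹ • v) 0 = 1 := inv_mul_cancel₀ hv
    have hscale : eval v F = v 0 ^ e * eval ((v 0)⁻¹ • v) F := by
      rw [← hF.eval_smul, smul_inv_smul₀ hv]
    rw [hscale, ← eval_deh F hw, h, map_zero, mul_zero, mul_zero]

end Dehomogenization

/-- Homogenization to degree `e`; components of `g` of degree above `e` are discarded. -/
def homogenize (n e : ℕ) (g : MvPolynomial (Fin n) ℂ) : MvPolynomial (Fin (n + 1)) ℂ :=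
  ∑ k ∈ Finset.range (e + 1), X 0 ^ (e - k) * rename Fin.succ (homogeneousComponent k g)

section Homogenization

variable {n : ℕ}

theorem isHomogeneous_homogenize (e : ℕ) (g : MvPolynomial (Fin n) ℂ) :
    (homogenize n e g).IsHomogeneous e := by
  refine IsHomogeneous.sum _ _ _ fun k hk => ?_
  have hke : e - k + k = e := Nat.sub_add_cancel (Nat.lt_succ_iff.mp (Finset.mem_range.mp hk))
  simpa only [hke] using (isHomogeneous_X_pow (0 : Fin (n + 1)) (e - k)).mul
    (homogeneousComponent_isHomogeneous k g).rename_isHomogeneous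

theorem deh_homogenize {e : ℕ} {g : MvPolynomial (Fin n) ℂ} (hg : g.totalDegree ≤ e) :
    deh n (homogenize n e g) = g := by
  simp only [homogenize, map_sum, map_mul, map_pow, deh_X_zero, one_pow, one_mul,
    deh_rename_succ]
  exact sum_homogeneousComponent_of_totalDegree_le hg

theorem eval_pt_homogenize {e : ℕ} {g : MvPolynomial (Fin n) ℂ} (hg : g.totalDegree ≤ e) :
    eval (pt n) (homogenize n e g) = eval 0 g := by
  have htail : Fin.tail (pt n) = 0 := funext fun j => by simp [pt, Fin.tail]
  rw [← eval_deh _ (by simp [pt]), deh_homogenize hg, htail]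

end Homogenization

theorem SaitoQH.exists_isHomogeneous_mul_eq {n d : ℕ} {f : MvPolynomial (Fin (n + 1)) ℂ}
    (hf : f.IsHomogeneous d) (hQH : SaitoQH (deh n f)) :
    ∃ (H : MvPolynomial (Fin (n + 1)) ℂ) (e : ℕ) (B : Fin n → MvPolynomial (Fin (n + 1)) ℂ),
      H.IsHomogeneous e ∧ eval (pt n) H ≠ 0 ∧ (∀ j, (B j).IsHomogeneous e) ∧
      H * f = X 0 * ∑ j, B j * pderiv j.succ f := by
  obtain ⟨u, hu, hmem⟩ := hQH
  obtain ⟨b, hb⟩ := (Submodule.mem_span_range_iff_exists_fun _).mp hmem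
  set e := u.totalDegree + ∑ j, (b j).totalDegree
  have hue : u.totalDegree ≤ e := Nat.le_add_right _ _
  have hbe (j : Fin n) : (b j).totalDegree ≤ e :=
    (Finset.single_le_sum (f := fun j => (b j).totalDegree) (fun j _ => Nat.zero_le _)
      (Finset.mem_univ j)).trans (Nat.le_add_left _ _)
  refine ⟨homogenize n e u, e, fun j => homogenize n e (b j), isHomogeneous_homogenize e u,
    by rwa [eval_pt_homogenize hue], fun j => isHomogeneous_homogenize e (b j), ?_⟩
  rw [← sub_eq_zero, Finset.mul_sum]
  refine eq_zero_of_deh_eq_zero ((isHomogeneous_homogenize e u).mul hf |>.sub <|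
    IsHomogeneous.sum _ _ _ fun j _ => ?_) ?_
  · rw [mul_left_comm]
    exact (isHomogeneous_homogenize e (b j)).mul (hf.X_mul_pderiv 0 j.succ)
  · simp only [map_sub, map_sum, map_mul, deh_X_zero, one_mul, deh_homogenize hue,
      deh_homogenize (hbe _), deh_pderiv_succ]
    simpa [sub_eq_zero, smul_eq_mul] using hb.symm

theorem stmt_5_general (n d : ℕ) (f : MvPolynomial (Fin (n + 1)) ℂ)
    (hf : f.IsHomogeneous d)
    (hQH : SaitoQH (deh n f)) :
    ∃ (h : MvPolynomial (Fin (n + 1)) ℂ) (e : ℕ), h.IsHomogeneous e ∧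
      eval (pt n) h ≠ 0 ∧
      ∃ a : Fin n → MvPolynomial (Fin (n + 1)) ℂ,
        (∀ j, ∃ e' : ℕ, (a j).IsHomogeneous e') ∧
        h * pderiv 0 f = ∑ j, a j * pderiv j.succ f := by
  obtain ⟨H, e, B, hH, hHp, hB, hHf⟩ := hQH.exists_isHomogeneous_mul_eq hf
  refine ⟨X 0 * H, 1 + e, (isHomogeneous_X ℂ 0).mul hH, ?_, _,
    fun j => ⟨0 + 1 + e, ((isHomogeneous_C _ _).mul (isHomogeneous_X ℂ 0)).mul (hB j) |>.sub ?_⟩,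
    hf.X_zero_mul_mul_pderiv_zero hHf⟩
  · simpa [pt] using hHp
  · simpa [add_comm] using hH.mul (isHomogeneous_X ℂ j.succ)

/-- The 'only if' direction of Theorem 3.1, in the coordinate system of its proof:
if the hypersurface `V(f)` has only isolated singularities, `p = (1:0:⋯:0)` is a singular
point, the `n` partials `∂₁f,…,∂ₙf` have only finitely many common zeros in `ℙⁿ`, and the
dehomogenization `g = f(1,y)` satisfies Saito's local condition, then there is a homogeneous
polynomial `h` with `h(p) ≠ 0` and homogeneous `a₁,…,aₙ` with `h·∂₀f = Σⱼ aⱼ·∂ⱼf`;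
in particular `(h, −a₁, …, −aₙ)` is a Jacobian syzygy for `f` not vanishing at `p`. -/
theorem stmt_5 (n d : ℕ) (hn : 2 ≤ n) (f : MvPolynomial (Fin (n + 1)) ℂ)
    (hf : f.IsHomogeneous d)
    (hiso : {P : Projectivization ℂ (Fin (n + 1) → ℂ) |
      ∀ i, eval P.rep (pderiv i f) = 0}.Finite)
    (hsing : ∀ i, eval (pt n) (pderiv i f) = 0)
    (hci : {P : Projectivization ℂ (Fin (n + 1) → ℂ) |
      ∀ j : Fin n, eval P.rep (pderiv j.succ f) = 0}.Finite)
    (hQH : SaitoQH (deh n f)) :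
    ∃ (h : MvPolynomial (Fin (n + 1)) ℂ) (e : ℕ), h.IsHomogeneous e ∧
      eval (pt n) h ≠ 0 ∧
      ∃ a : Fin n → MvPolynomial (Fin (n + 1)) ℂ,
        (∀ j, ∃ e' : ℕ, (a j).IsHomogeneous e') ∧
        h * pderiv 0 f = ∑ j, a j * pderiv j.succ f :=
  stmt_5_general n d f hf hQH
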